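/- arXiv:1903.02254 — 2 statements merged into one kernel-verified Lean document; each statement's English description precedes it below -/
import Mathlib

section
/- Let α, β ∈ ℂ with |α| = |β| = 1. Then the Radford algebra H admits a *-structure (making H a Hopf *-algebra) uniquely determined by g* = g, x* = αx, y* = βy; that is, there exists a conjugate-linear map * : H → H with (h*)* = h, (hl)* = l*h*, Δ(h*) = Σ (h₁)* ⊗ (h₂)*, and S(S(h*)*) = h for all h, l ∈ H, satisfying g* = g, x* = αx, y* = βy. -/
open TensorProduct

noncomputable section

/-- The Gaussian (`q`-)binomial coefficient `C(m, k)_q`, defined by the `q`-Pascal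
recurrence `C(m+1, k+1)_q = C(m, k)_q + q^(k+1) * C(m, k+1)_q`. -/
def qBinom (q : ℂ) : ℕ → ℕ → ℂ
  | _, 0 => 1
  | 0, _ + 1 => 0
  | m + 1, k + 1 => qBinom q m k + q ^ (k + 1) * qBinom q m (k + 1)

/-- The Radford algebra: a Hopf algebra `H` over `ℂ` generated by elements
`g, x, y` subject to the relations `g^n = 1`, `x^n = y^n = 0`, `xg = ω g x`,
`g y = ω y g`, `x y = ω y x`, where `ω` is a root of unity of order `n > 1`,
with the comultiplication, counit and antipode determined by
`Δ(g) = g ⊗ g`, `ε(g) = 1`, `S(g) = g^(n-1)`,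
`Δ(x) = x ⊗ g + 1 ⊗ x`, `ε(x) = 0`, `S(x) = -x g^(n-1)`,
`Δ(y) = y ⊗ g + 1 ⊗ y`, `ε(y) = 0`, `S(y) = -y g^(n-1)`,
and with canonical `ℂ`-basis `{y^r x^s g^l | 0 ≤ r, s, l < n}`. -/
structure RadfordAlgebra (n : ℕ) (ω : ℂ) (H : Type*) [Ring H] [HopfAlgebra ℂ H] where
  g : H
  x : H
  y : H
  hn : 1 < n
  hω : IsPrimitiveRoot ω n
  g_pow : g ^ n = 1
  x_pow : x ^ n = 0
  y_pow : y ^ n = 0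
  rel_xg : x * g = ω • (g * x)
  rel_gy : g * y = ω • (y * g)
  rel_xy : x * y = ω • (y * x)
  comul_g : Coalgebra.comul (R := ℂ) g = g ⊗ₜ[ℂ] g
  counit_g : Coalgebra.counit (R := ℂ) g = 1
  antipode_g : HopfAlgebra.antipode (R := ℂ) g = g ^ (n - 1)
  comul_x : Coalgebra.comul (R := ℂ) x = x ⊗ₜ[ℂ] g + 1 ⊗ₜ[ℂ] x
  counit_x : Coalgebra.counit (R := ℂ) x = 0
  antipode_x : HopfAlgebra.antipode (R := ℂ) x = -(x * g ^ (n - 1))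
  comul_y : Coalgebra.comul (R := ℂ) y = y ⊗ₜ[ℂ] g + 1 ⊗ₜ[ℂ] y
  counit_y : Coalgebra.counit (R := ℂ) y = 0
  antipode_y : HopfAlgebra.antipode (R := ℂ) y = -(y * g ^ (n - 1))
  gen : Algebra.adjoin ℂ ({g, x, y} : Set H) = ⊤
  basis : Module.Basis (Fin n × Fin n × Fin n) ℂ H
  basis_eq : ∀ r s l : Fin n, basis (r, s, l) = y ^ (r : ℕ) * x ^ (s : ℕ) * g ^ (l : ℕ)

/-- A `*`-structure on a Hopf algebra `H` over `ℂ`: a conjugate-linear map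
`* : H → H` such that `(h*)* = h`, `(hl)* = l* h*`,
`Δ(h*) = Σ (h₁)* ⊗ (h₂)*` and `S(S(h*)*) = h` for all `h, l ∈ H`.
(The condition on `Δ` is expressed via the auxiliary additive map `starTensor`
on `H ⊗[ℂ] H` sending `a ⊗ b` to `a* ⊗ b*`, which is uniquely determined by
its two defining properties.) -/
structure HopfStarStructure (H : Type*) [Ring H] [HopfAlgebra ℂ H] where
  star : H → H
  star_add : ∀ a b : H, star (a + b) = star a + star b
  star_smul : ∀ (c : ℂ) (a : H), star (c • a) = (starRingEnd ℂ c) • star a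
  star_star : ∀ a : H, star (star a) = a
  star_mul : ∀ a b : H, star (a * b) = star b * star a
  starTensor : H ⊗[ℂ] H → H ⊗[ℂ] H
  starTensor_add : ∀ u v : H ⊗[ℂ] H, starTensor (u + v) = starTensor u + starTensor v
  starTensor_tmul : ∀ a b : H, starTensor (a ⊗ₜ[ℂ] b) = star a ⊗ₜ[ℂ] star b
  comul_star : ∀ a : H,
    Coalgebra.comul (R := ℂ) (star a) = starTensor (Coalgebra.comul (R := ℂ) a)
  antipode_star : ∀ a : H,
    HopfAlgebra.antipode (R := ℂ) (star (HopfAlgebra.antipode (R := ℂ) (star a))) = a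

/-- Two `*`-structures `*'` and `*''` on a Hopf algebra `H` over `ℂ` are
equivalent if there is a Hopf algebra automorphism `ψ` of `H` such that
`ψ(h^{*'}) = ψ(h)^{*''}` for all `h ∈ H`. -/
def HopfStarStructure.Equivalent {H : Type*} [Ring H] [HopfAlgebra ℂ H]
    (s₁ s₂ : HopfStarStructure H) : Prop :=
  ∃ ψ : H ≃ₐc[ℂ] H, ∀ h : H, ψ (s₁.star h) = s₂.star (ψ h)

/-!
The `*`-structure is defined on the PBW basis `y^r x^s g^l`, where antimultiplicativity forces
`(y^r x^s g^l)* = α^s β^r g^l x^s y^r`, and extended conjugate-linearly. That this map reverses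
products only has to be checked for left multiplication of a basis monomial by a generator, which
is a `q`-commutation computation using `conj ω = ω⁻¹`. Then `h ↦ h**`, `h ↦ S(S(h*)*)` and
`h ↦ (* ⊗ *)(Δ(h*))` are algebra homomorphisms, so it suffices to compare them with the
identity, resp. with `Δ`, on `g`, `x` and `y`; this is where `|α| = |β| = 1` enters.
-/

namespace Module.Basis

variable {ι R S M N : Type*} [Fintype ι] [CommSemiring R] [CommSemiring S]
  [AddCommMonoid M] [Module R M] [AddCommMonoid N] [Module S N]

def constrₛₗ (b : Basis ι R M) (σ : R →+* S) (v : ι → N) : M →ₛₗ[σ] N where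
  toFun m := ∑ i, σ (b.repr m i) • v i
  map_add' m m' := by simp [add_smul, Finset.sum_add_distrib]
  map_smul' c m := by simp [mul_smul, Finset.smul_sum]

@[simp]
lemma constrₛₗ_basis (b : Basis ι R M) (σ : R →+* S) (v : ι → N) (i : ι) :
    b.constrₛₗ σ v (b i) = v i := by
  classical
  simp [constrₛₗ, Finsupp.single_apply]

end Module.Basis

lemma map_pow_of_map_mul_rev {F M N : Type*} [Monoid M] [Monoid N] [FunLike F M N] (f : F)
    (h1 : f 1 = 1) (hmul : ∀ a b, f (a * b) = f b * f a) (a : M) (k : ℕ) :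
    f (a ^ k) = f a ^ k := by
  induction k with
  | zero => simpa using h1
  | succ k ih => rw [pow_succ, hmul, ih, pow_succ']

lemma HopfAlgebra.antipode_pow {R A : Type*} [CommSemiring R] [Semiring A] [HopfAlgebra R A]
    (a : A) (k : ℕ) : antipode R (a ^ k) = antipode R a ^ k :=
  map_pow_of_map_mul_rev _ antipode_one antipode_mul_antidistrib a k

lemma LinearMap.map_mul_rev_of_adjoin_eq_top {R S A B : Type*} [CommSemiring R]
    [CommSemiring S] {σ : R →+* S} [Semiring A] [Algebra R A] [Semiring B] [Algebra S B]
    {s : Set A} (hs : Algebra.adjoin R s = ⊤) (f : A →ₛₗ[σ] B) (h1 : f 1 = 1)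
    (hgen : ∀ z ∈ s, ∀ a, f (z * a) = f a * f z) (a b : A) : f (a * b) = f b * f a := by
  have ha : a ∈ Algebra.adjoin R s := hs ▸ Algebra.mem_top
  induction ha using Algebra.adjoin_induction generalizing b with
  | mem z hz => exact hgen z hz b
  | algebraMap c =>
    rw [Algebra.algebraMap_eq_smul_one, smul_mul_assoc, one_mul, map_smulₛₗ, map_smulₛₗ, h1,
      mul_smul_comm, mul_one]
  | add u v _ _ hu hv => simp [add_mul, hu, hv, mul_add]
  | mul u v _ _ hu hv => rw [mul_assoc, hu, hv, hu, mul_assoc]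

lemma LinearMap.eq_algHom_of_adjoin_eq_top {R A B : Type*} [CommSemiring R] [Semiring A]
    [Algebra R A] [Semiring B] [Algebra R B] {s : Set A} (hs : Algebra.adjoin R s = ⊤)
    (f : A →ₗ[R] B) (h1 : f 1 = 1) (hmul : ∀ a b, f (a * b) = f a * f b)
    (φ : A →ₐ[R] B) (hgen : ∀ z ∈ s, f z = φ z) (a : A) : f a = φ a :=
  DFunLike.congr_fun (AlgHom.ext_of_adjoin_eq_top hs (φ₁ := .ofLinearMap f h1 hmul) hgen) a

lemma TensorProduct.map_mul_rev {R S A B A' B' : Type*} [CommSemiring R] [CommSemiring S]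
    {σ : R →+* S} [Semiring A] [Algebra R A] [Semiring B] [Algebra S B] [Semiring A']
    [Algebra R A'] [Semiring B'] [Algebra S B'] (f : A →ₛₗ[σ] B) (f' : A' →ₛₗ[σ] B')
    (hf : ∀ a b, f (a * b) = f b * f a) (hf' : ∀ a b, f' (a * b) = f' b * f' a)
    (u v : A ⊗[R] A') :
    TensorProduct.map f f' (u * v) = TensorProduct.map f f' v * TensorProduct.map f f' u := by
  induction u with
  | zero => simp
  | add u u' hu hu' => simp [add_mul, mul_add, hu, hu']
  | tmul a a' =>
    induction v with
    | zero => simp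
    | add v v' hv hv' => simp [add_mul, mul_add, hv, hv']
    | tmul b b' => simp [hf, hf']

section QCommute

variable {K A : Type*} [Semiring A]

lemma mul_pow_eq_smul_of_mul_eq_smul [CommSemiring K] [Algebra K A] {a b : A} {c : K}
    (h : a * b = c • (b * a)) (k : ℕ) : a * b ^ k = c ^ k • (b ^ k * a) := by
  induction k with
  | zero => simp
  | succ k ih =>
    rw [pow_succ, ← mul_assoc, ih, smul_mul_assoc, mul_assoc, h, mul_smul_comm, smul_smul,
      ← mul_assoc, pow_succ]

lemma pow_mul_eq_smul_of_mul_eq_smul [CommSemiring K] [Algebra K A] {a b : A} {c : K}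
    (h : a * b = c • (b * a)) (k : ℕ) : a ^ k * b = c ^ k • (b * a ^ k) := by
  induction k with
  | zero => simp
  | succ k ih =>
    rw [pow_succ', mul_assoc, ih, mul_smul_comm, ← mul_assoc, h, smul_mul_assoc, smul_smul,
      mul_assoc, pow_succ', mul_comm c]

lemma mul_eq_inv_smul_of_mul_eq_smul [Field K] [Algebra K A] {a b : A} {c : K} (hc : c ≠ 0)
    (h : a * b = c • (b * a)) : b * a = c⁻¹ • (a * b) := by
  rw [h, smul_smul, inv_mul_cancel₀ hc, one_smul]

end QCommute

namespace RadfordAlgebra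

variable {n : ℕ} {ω : ℂ} {H : Type*} [Ring H] [HopfAlgebra ℂ H]

lemma n_ne_zero (R : RadfordAlgebra n ω H) : n ≠ 0 := by have := R.hn; omega

lemma conj_omega (R : RadfordAlgebra n ω H) : starRingEnd ℂ ω = ω⁻¹ :=
  (Complex.inv_eq_conj (R.hω.norm'_eq_one R.n_ne_zero)).symm

variable (R : RadfordAlgebra n ω H)

lemma g_pow_pred_mul_g : R.g ^ (n - 1) * R.g = 1 := by
  rw [← pow_succ, Nat.sub_add_cancel (Nat.one_le_iff_ne_zero.mpr R.n_ne_zero), R.g_pow]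

lemma g_pow_pred_pow_pred : (R.g ^ (n - 1)) ^ (n - 1) = R.g := by
  obtain ⟨m, rfl⟩ : ∃ m, n = m + 2 := ⟨n - 2, by have := R.hn; omega⟩
  rw [show m + 2 - 1 = m + 1 from rfl, ← pow_mul,
    show (m + 1) * (m + 1) = (m + 2) * m + 1 by ring, pow_succ, pow_mul, R.g_pow, one_pow, one_mul]

lemma y_mul_g : R.y * R.g = ω⁻¹ • (R.g * R.y) :=
  mul_eq_inv_smul_of_mul_eq_smul (R.hω.ne_zero R.n_ne_zero) R.rel_gy

lemma g_mul_x : R.g * R.x = ω⁻¹ • (R.x * R.g) :=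
  mul_eq_inv_smul_of_mul_eq_smul (R.hω.ne_zero R.n_ne_zero) R.rel_xg

lemma y_mul_x : R.y * R.x = ω⁻¹ • (R.x * R.y) :=
  mul_eq_inv_smul_of_mul_eq_smul (R.hω.ne_zero R.n_ne_zero) R.rel_xy

lemma g_mul_monomial (r s l : ℕ) :
    R.g * (R.y ^ r * R.x ^ s * R.g ^ l)
      = (ω ^ r * ω⁻¹ ^ s) • (R.y ^ r * R.x ^ s * R.g ^ (l + 1)) := by
  rw [← mul_assoc, ← mul_assoc, mul_pow_eq_smul_of_mul_eq_smul R.rel_gy, smul_mul_assoc,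
    smul_mul_assoc, mul_assoc _ R.g, mul_pow_eq_smul_of_mul_eq_smul R.g_mul_x, mul_smul_comm,
    smul_mul_assoc, smul_smul, pow_succ']
  simp only [mul_assoc]

lemma x_mul_monomial (r s l : ℕ) :
    R.x * (R.y ^ r * R.x ^ s * R.g ^ l) = ω ^ r • (R.y ^ r * R.x ^ (s + 1) * R.g ^ l) := by
  rw [← mul_assoc, ← mul_assoc, mul_pow_eq_smul_of_mul_eq_smul R.rel_xy, smul_mul_assoc,
    smul_mul_assoc, mul_assoc _ R.x, ← pow_succ']

lemma reverse_monomial_mul_g (l s r : ℕ) :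
    R.g ^ l * R.x ^ s * R.y ^ r * R.g
      = (ω⁻¹ ^ r * ω ^ s) • (R.g ^ (l + 1) * R.x ^ s * R.y ^ r) := by
  rw [mul_assoc, pow_mul_eq_smul_of_mul_eq_smul R.y_mul_g, mul_smul_comm, ← mul_assoc,
    mul_assoc _ _ R.g, pow_mul_eq_smul_of_mul_eq_smul R.rel_xg, mul_smul_comm, smul_mul_assoc,
    smul_smul, ← mul_assoc, ← pow_succ]

lemma reverse_monomial_mul_x (l s r : ℕ) :
    R.g ^ l * R.x ^ s * R.y ^ r * R.x = ω⁻¹ ^ r • (R.g ^ l * R.x ^ (s + 1) * R.y ^ r) := by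
  rw [mul_assoc, pow_mul_eq_smul_of_mul_eq_smul R.y_mul_x, mul_smul_comm, ← mul_assoc,
    mul_assoc _ _ R.x, ← pow_succ]

def starMap (α β : ℂ) : H →ₛₗ[starRingEnd ℂ] H :=
  R.basis.constrₛₗ (starRingEnd ℂ) fun p =>
    (α ^ (p.2.1 : ℕ) * β ^ (p.1 : ℕ)) •
      (R.g ^ (p.2.2 : ℕ) * R.x ^ (p.2.1 : ℕ) * R.y ^ (p.1 : ℕ))

variable (α β : ℂ)

lemma starMap_monomial (r s l : ℕ) :
    R.starMap α β (R.y ^ r * R.x ^ s * R.g ^ l)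
      = (α ^ s * β ^ r) • (R.g ^ l * R.x ^ s * R.y ^ r) := by
  rcases lt_or_ge r n with hr | hr
  swap
  · simp [pow_eq_zero_of_le hr R.y_pow]
  rcases lt_or_ge s n with hs | hs
  swap
  · simp [pow_eq_zero_of_le hs R.x_pow]
  have hl : l % n < n := Nat.mod_lt l (Nat.pos_of_ne_zero R.n_ne_zero)
  have hbasis := R.basis_eq ⟨r, hr⟩ ⟨s, hs⟩ ⟨l % n, hl⟩
  rw [← pow_eq_pow_mod l R.g_pow] at hbasis
  rw [← hbasis, starMap, Module.Basis.constrₛₗ_basis, ← pow_eq_pow_mod l R.g_pow]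

lemma starMap_one : R.starMap α β 1 = 1 := by
  simpa using R.starMap_monomial α β 0 0 0

lemma starMap_g : R.starMap α β R.g = R.g := by
  simpa using R.starMap_monomial α β 0 0 1

lemma starMap_x : R.starMap α β R.x = α • R.x := by
  simpa using R.starMap_monomial α β 0 1 0

lemma starMap_y : R.starMap α β R.y = β • R.y := by
  simpa using R.starMap_monomial α β 1 0 0

lemma starMap_gen_mul : ∀ z ∈ ({R.g, R.x, R.y} : Set H), ∀ a,
    R.starMap α β (z * a) = R.starMap α β a * R.starMap α β z := by
  have conj_omega_inv : starRingEnd ℂ ω⁻¹ = ω := by rw [map_inv₀, R.conj_omega, inv_inv]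
  rintro z hz a
  suffices (R.starMap α β).comp (LinearMap.mulLeft ℂ z)
      = (LinearMap.mulRight ℂ (R.starMap α β z)).comp (R.starMap α β) from
    LinearMap.congr_fun this a
  refine R.basis.ext fun ⟨r, s, l⟩ => ?_
  simp only [LinearMap.comp_apply, LinearMap.mulLeft_apply, LinearMap.mulRight_apply,
    R.basis_eq]
  rcases hz with rfl | rfl | rfl
  · rw [g_mul_monomial, map_smulₛₗ, starMap_monomial, starMap_g, starMap_monomial,
      smul_mul_assoc, reverse_monomial_mul_g, smul_smul, smul_smul]
    simp only [map_mul, map_pow, R.conj_omega, conj_omega_inv]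
    congr 1
    ring
  · rw [x_mul_monomial, map_smulₛₗ, starMap_monomial, starMap_x, starMap_monomial,
      smul_mul_assoc, mul_smul_comm, reverse_monomial_mul_x, smul_smul, smul_smul, smul_smul]
    simp only [map_pow, R.conj_omega]
    congr 1
    ring
  · rw [← mul_assoc, ← mul_assoc, ← pow_succ', starMap_monomial, starMap_y, starMap_monomial,
      smul_mul_assoc, mul_smul_comm, smul_smul]
    simp only [pow_succ, mul_assoc]

lemma starMap_mul (a b : H) : R.starMap α β (a * b) = R.starMap α β b * R.starMap α β a :=
  LinearMap.map_mul_rev_of_adjoin_eq_top R.gen _ (R.starMap_one α β) (R.starMap_gen_mul α β) a b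

lemma starMap_pow (a : H) (k : ℕ) : R.starMap α β (a ^ k) = R.starMap α β a ^ k :=
  map_pow_of_map_mul_rev _ (R.starMap_one α β) (R.starMap_mul α β) a k

variable {α β}

lemma starMap_starMap (hα : ‖α‖ = 1) (hβ : ‖β‖ = 1) (a : H) :
    R.starMap α β (R.starMap α β a) = a := by
  refine LinearMap.eq_algHom_of_adjoin_eq_top R.gen ((R.starMap α β).comp (R.starMap α β))
    (by simp [starMap_one]) (by simp [starMap_mul]) (AlgHom.id ℂ H) ?_ a
  rintro z (rfl | rfl | rfl) <;>
    simp [starMap_g, starMap_x, starMap_y, smul_smul, Complex.conj_mul', hα, hβ]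

lemma comul_starMap (hα : ‖α‖ = 1) (hβ : ‖β‖ = 1) (a : H) :
    Coalgebra.comul (R := ℂ) (R.starMap α β a)
      = TensorProduct.map (R.starMap α β) (R.starMap α β) (Coalgebra.comul (R := ℂ) a) := by
  -- `(* ⊗ *) ∘ Δ ∘ *` is multiplicative, so it equals `Δ`; evaluate it at `a*`.
  have key := LinearMap.eq_algHom_of_adjoin_eq_top R.gen
    ((TensorProduct.map (R.starMap α β) (R.starMap α β)).comp
      ((Coalgebra.comul (R := ℂ)).comp (R.starMap α β)))
    (by simp [starMap_one, Algebra.TensorProduct.one_def])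
    (fun a b => by
      simp [starMap_mul, TensorProduct.map_mul_rev _ _ (R.starMap_mul α β) (R.starMap_mul α β)])
    (Bialgebra.comulAlgHom ℂ H) ?_ (R.starMap α β a)
  · simpa [R.starMap_starMap hα hβ] using key.symm
  rintro z (rfl | rfl | rfl)
  · simp [starMap_g, R.comul_g]
  · simp [starMap_x, R.comul_x, starMap_g, starMap_one, TensorProduct.smul_tmul', smul_smul,
      Complex.mul_conj', Complex.conj_mul', hα]
  · simp [starMap_y, R.comul_y, starMap_g, starMap_one, TensorProduct.smul_tmul', smul_smul,
      Complex.mul_conj', Complex.conj_mul', hβ]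

lemma antipode_starMap (hα : ‖α‖ = 1) (hβ : ‖β‖ = 1) (a : H) :
    HopfAlgebra.antipode ℂ (R.starMap α β (HopfAlgebra.antipode ℂ (R.starMap α β a)))
      = a := by
  refine LinearMap.eq_algHom_of_adjoin_eq_top R.gen
    ((HopfAlgebra.antipode ℂ).comp ((R.starMap α β).comp
      ((HopfAlgebra.antipode ℂ).comp (R.starMap α β))))
    (by simp [starMap_one]) (by simp [starMap_mul, HopfAlgebra.antipode_mul_antidistrib])
    (AlgHom.id ℂ H) ?_ a
  rintro z (rfl | rfl | rfl)
  · simp [starMap_g, R.antipode_g, starMap_pow, HopfAlgebra.antipode_pow, g_pow_pred_pow_pred]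
  all_goals
    simp [starMap_x, starMap_y, R.antipode_x, R.antipode_y, R.antipode_g, starMap_mul,
      starMap_pow, starMap_g, HopfAlgebra.antipode_mul_antidistrib, HopfAlgebra.antipode_pow,
      g_pow_pred_pow_pred, smul_smul, Complex.conj_mul', hα, hβ, mul_assoc, g_pow_pred_mul_g]

end RadfordAlgebra

/-- For `α, β ∈ ℂ` with `|α| = |β| = 1`, the Radford algebra `H`
admits a `*`-structure with `g* = g`, `x* = α x`, `y* = β y`. -/
theorem radford_star_structure_of_unit_scalars
    {n : ℕ} {ω : ℂ} {H : Type*} [Ring H] [HopfAlgebra ℂ H]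
    (R : RadfordAlgebra n ω H) (α β : ℂ)
    (hα : ‖α‖ = 1) (hβ : ‖β‖ = 1) :
    ∃ st : HopfStarStructure H,
      st.star R.g = R.g ∧ st.star R.x = α • R.x ∧ st.star R.y = β • R.y :=
  ⟨{ star := R.starMap α β
     star_add := map_add _
     star_smul := map_smulₛₗ _
     star_star := R.starMap_starMap hα hβ
     star_mul := R.starMap_mul α β
     starTensor := TensorProduct.map (R.starMap α β) (R.starMap α β)
     starTensor_add := map_add _
     starTensor_tmul := TensorProduct.map_tmul _ _
     comul_star := R.comul_starMap hα hβ
     antipode_star := R.antipode_starMap hα hβ },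
    R.starMap_g α β, R.starMap_x α β, R.starMap_y α β⟩
end
end

section
/- Assume n > 2. Then every *-structure on the Radford algebra H is of the form g* = g, x* = αx, y* = βy for some α, β ∈ ℂ with |α| = |β| = 1; that is, if * is a *-structure on H, then g* = g and there exist α, β ∈ ℂ with |α| = |β| = 1 such that x* = αx and y* = βy. -/
open TensorProduct

noncomputable section

/-!
Work in the basis `y^r x^s g^l`. Since `*` is compatible with `Δ`, `g*` is group-like and `x*`, `y*`
are `(g*, 1)`-skew-primitive. Comparing coefficients of `Δ` at index pairs where the `q`-binomial
coefficients of `Δ(y^r x^s g^l)` are trivial shows that the only nonzero group-likes are the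
powers `g^k`, and that a `(g^k, 1)`-skew-primitive element is supported on `1, g^k, y^k, x^k`.
Applying `*` to the commutation relations (with `ω̄ = ω⁻¹`) gives `g^k x* = ω⁻¹ x* g^k` and
`g^k y* = ω y* g^k`; as `g^k` acts on `y^k` by `ω^(k²) = ω` and on `x^k` by `ω⁻¹`, and `ω ≠ ω⁻¹` for
`n > 2`, only the `x^k` resp. `y^k` component survives. Finally `g = g** = g^(k²)` and
`x = x** ∈ ℂ x^(k²)` force `k = 1`, and `x = x** = ᾱ α x` gives `|α| = 1`.
-/

lemma qBinom_zero_right (q : ℂ) (m : ℕ) : qBinom q m 0 = 1 := by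
  cases m <;> rfl

lemma qBinom_eq_zero_of_lt (q : ℂ) {m k : ℕ} (h : m < k) : qBinom q m k = 0 := by
  induction m generalizing k with
  | zero => obtain ⟨k, rfl⟩ := Nat.exists_eq_add_of_lt h; rfl
  | succ m ih =>
    obtain ⟨k, rfl⟩ : ∃ j, k = j + 1 := ⟨k - 1, by omega⟩
    rw [qBinom, ih (by omega), ih (by omega), mul_zero, add_zero]

lemma qBinom_self (q : ℂ) (m : ℕ) : qBinom q m m = 1 := by
  induction m with
  | zero => rfl
  | succ m ih => rw [qBinom, ih, qBinom_eq_zero_of_lt q (by omega), mul_zero, add_zero]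

section QCommuting

variable {A : Type*} [Semiring A] [Algebra ℂ A] (q : ℂ)

lemma pow_mul_pow_of_mul_eq_smul {u v : A} (h : u * v = q • (v * u)) (t s : ℕ) :
    u ^ t * v ^ s = q ^ (t * s) • (v ^ s * u ^ t) := by
  have base : ∀ s : ℕ, u * v ^ s = q ^ s • (v ^ s * u) := by
    intro s
    induction s with
    | zero => simp
    | succ s ih =>
      rw [pow_succ, ← mul_assoc, ih, smul_mul_assoc, mul_assoc, h, mul_smul_comm, smul_smul,
        ← mul_assoc, ← pow_succ, pow_succ q]
  induction t with
  | zero => simp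
  | succ t ih =>
    rw [pow_succ, mul_assoc, base, mul_smul_comm, ← mul_assoc, ih, smul_mul_assoc, smul_smul,
      mul_assoc, ← pow_succ, ← pow_add]
    congr 2
    ring

/-- The `q`-binomial theorem. -/
theorem add_pow_of_mul_eq_smul {a b : A} (h : b * a = q • (a * b)) (m : ℕ) :
    (a + b) ^ m = ∑ k ∈ Finset.range (m + 1), qBinom q m k • (a ^ (m - k) * b ^ k) := by
  induction m with
  | zero => simp [qBinom]
  | succ m ih =>
    have hb : ∀ k, b ^ k * a = q ^ k • (a * b ^ k) := fun k => by
      simpa using pow_mul_pow_of_mul_eq_smul q h k 1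
    have hterm : ∀ k ∈ Finset.range (m + 1),
        qBinom q m k • (a ^ (m - k) * b ^ k) * (a + b)
          = (qBinom q m k * q ^ k) • (a ^ (m + 1 - k) * b ^ k)
            + qBinom q m k • (a ^ (m - k) * b ^ (k + 1)) := by
      intro k hk
      have hk : m + 1 - k = m - k + 1 := by simp at hk; omega
      rw [mul_add, smul_mul_assoc, smul_mul_assoc, mul_assoc, hb, mul_smul_comm, smul_smul,
        mul_assoc, ← pow_succ, ← mul_assoc, ← pow_succ, hk]
    have hS1 : ∑ k ∈ Finset.range (m + 1), (qBinom q m k * q ^ k) • (a ^ (m + 1 - k) * b ^ k)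
        = ∑ k ∈ Finset.range (m + 1),
            (qBinom q m (k + 1) * q ^ (k + 1)) • (a ^ (m - k) * b ^ (k + 1))
          + a ^ (m + 1) := by
      rw [Finset.sum_range_succ' _ m, Finset.sum_range_succ, qBinom_eq_zero_of_lt q m.lt_succ_self]
      simp [qBinom_zero_right]
    rw [pow_succ, ih, Finset.sum_mul, Finset.sum_congr rfl hterm, Finset.sum_add_distrib, hS1,
      Finset.sum_range_succ' _ (m + 1)]
    simp only [qBinom, Nat.add_sub_add_right, add_smul, Finset.sum_add_distrib, mul_comm (q ^ _),
      Nat.sub_zero, pow_zero, mul_one, one_smul]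
    abel

end QCommuting

theorem Module.Basis.repr_apply_of_apply_basis_eq_smul {ι R M : Type*} [CommSemiring R]
    [AddCommMonoid M] [Module R M] (b : Module.Basis ι R M) (f : M →ₗ[R] M) {σ : ι → ι}
    (hσ : σ.Injective) (c : ι → R) (hf : ∀ i, f (b i) = c i • b (σ i)) (p : M) (i : ι) :
    b.repr (f p) (σ i) = c i * b.repr p i := by
  have : (b.coord (σ i)).comp f = c i • b.coord i := b.ext fun j => by
    by_cases hj : j = i
    · simp [hf, hj]
    · simp [hf, hσ.eq_iff, hj]
  exact LinearMap.congr_fun this p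

theorem Module.Basis.eq_repr_smul_of_forall_ne {ι R M : Type*} [Semiring R] [AddCommMonoid M]
    [Module R M] (b : Module.Basis ι R M) {p : M} {i : ι} (h : ∀ j ≠ i, b.repr p j = 0) :
    p = b.repr p i • b i := by
  refine b.repr.injective (Finsupp.ext fun j => ?_)
  by_cases hj : j = i
  · simp [hj]
  · simp [h j hj, Ne.symm hj]

namespace HopfStarStructure

variable {H : Type*} [Ring H] [HopfAlgebra ℂ H] (st : HopfStarStructure H)

lemma star_zero : st.star 0 = 0 := by
  simpa using st.star_add 0 0

lemma star_one : st.star 1 = 1 := by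
  simpa [st.star_star] using (st.star_mul 1 (st.star 1)).symm

lemma star_pow (a : H) (k : ℕ) : st.star (a ^ k) = st.star a ^ k := by
  induction k with
  | zero => simpa using st.star_one
  | succ k ih => rw [pow_succ, st.star_mul, ih, ← pow_succ']

lemma star_ne_zero {a : H} (ha : a ≠ 0) : st.star a ≠ 0 := fun h =>
  ha (by rw [← st.star_star a, h, st.star_zero])

lemma comul_star_of_comul_eq {a b : H}
    (h : Coalgebra.comul (R := ℂ) a = a ⊗ₜ[ℂ] b + 1 ⊗ₜ[ℂ] a) :
    Coalgebra.comul (R := ℂ) (st.star a) = st.star a ⊗ₜ[ℂ] st.star b + 1 ⊗ₜ[ℂ] st.star a := by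
  rw [st.comul_star, h, st.starTensor_add, st.starTensor_tmul, st.starTensor_tmul, st.star_one]

lemma norm_eq_one_of_star_eq_smul {a : H} {c : ℂ} (ha : a ≠ 0) (h : st.star a = c • a) :
    ‖c‖ = 1 := by
  have hcc : (starRingEnd ℂ c * c - 1) • a = 0 := by
    rw [sub_smul, one_smul, ← smul_smul, ← h, ← st.star_smul, ← h, st.star_star, sub_self]
  have hsq : ((‖c‖ ^ 2 : ℝ) : ℂ) = 1 := by
    rw [Complex.ofReal_pow, ← Complex.conj_mul']
    exact sub_eq_zero.mp ((smul_eq_zero.mp hcc).resolve_right ha)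
  exact (pow_eq_one_iff_of_nonneg (norm_nonneg c) two_ne_zero).mp (by exact_mod_cast hsq)

end HopfStarStructure

namespace RadfordAlgebra

variable {n : ℕ} {ω : ℂ} {H : Type*} [Ring H] [HopfAlgebra ℂ H]

lemma pos (R : RadfordAlgebra n ω H) : 0 < n := Nat.zero_lt_of_lt R.hn

lemma neZero (R : RadfordAlgebra n ω H) : NeZero n := ⟨R.pos.ne'⟩

lemma omega_ne_zero (R : RadfordAlgebra n ω H) : ω ≠ 0 := R.hω.ne_zero R.pos.ne'

lemma omega_inv_ne_one (R : RadfordAlgebra n ω H) : ω⁻¹ ≠ 1 := inv_ne_one.mpr (R.hω.ne_one R.hn)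

lemma omega_ne_inv (R : RadfordAlgebra n ω H) (hn : 2 < n) : ω ≠ ω⁻¹ := fun h => by
  have h2 : ω ^ 2 = 1 := by rw [sq]; nth_rw 1 [h]; exact inv_mul_cancel₀ R.omega_ne_zero
  have := Nat.le_of_dvd two_pos (R.hω.dvd_of_pow_eq_one 2 h2)
  omega

variable (R : RadfordAlgebra n ω H)

lemma gpow_mul_xpow (t s : ℕ) : R.g ^ t * R.x ^ s = ω⁻¹ ^ (t * s) • (R.x ^ s * R.g ^ t) :=
  pow_mul_pow_of_mul_eq_smul ω⁻¹ R.g_mul_x t s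

lemma gpow_mul_ypow (t s : ℕ) : R.g ^ t * R.y ^ s = ω ^ (t * s) • (R.y ^ s * R.g ^ t) :=
  pow_mul_pow_of_mul_eq_smul ω R.rel_gy t s

lemma xpow_eq_zero {a : ℕ} (ha : n ≤ a) : R.x ^ a = 0 := by
  rw [← Nat.add_sub_cancel' ha, pow_add, R.x_pow, zero_mul]

lemma ypow_eq_zero {a : ℕ} (ha : n ≤ a) : R.y ^ a = 0 := by
  rw [← Nat.add_sub_cancel' ha, pow_add, R.y_pow, zero_mul]

lemma repr_monomial (a b c : ℕ) (v : Fin n × Fin n × Fin n) :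
    R.basis.repr (R.y ^ a * R.x ^ b * R.g ^ c) v
      = if (v.1 : ℕ) = a ∧ (v.2.1 : ℕ) = b ∧ (v.2.2 : ℕ) = c % n then 1 else 0 := by
  obtain ⟨r, s, l⟩ := v
  by_cases ha : a < n
  · by_cases hb : b < n
    · rw [pow_eq_pow_mod c R.g_pow, ← R.basis_eq ⟨a, ha⟩ ⟨b, hb⟩ ⟨c % n, Nat.mod_lt _ R.pos⟩,
        R.basis.repr_self, Finsupp.single_apply]
      simp only [Prod.mk.injEq, Fin.ext_iff, eq_comm]
    · rw [R.xpow_eq_zero (by omega), mul_zero, zero_mul, map_zero, if_neg (by omega)]; rfl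
  · rw [R.ypow_eq_zero (by omega), zero_mul, zero_mul, map_zero, if_neg (by omega)]; rfl

lemma gpow_mod_eq_of_gpow_eq {a b : ℕ} (h : R.g ^ a = R.g ^ b) : a % n = b % n := by
  have e : ∀ m, R.g ^ m = R.basis (⟨0, R.pos⟩, ⟨0, R.pos⟩, ⟨m % n, Nat.mod_lt _ R.pos⟩) :=
    fun m => by simpa [R.basis_eq] using pow_eq_pow_mod m R.g_pow
  simpa using congrArg (fun v => (v.2.2 : ℕ)) (R.basis.injective ((e a).symm.trans (h.trans (e b))))

lemma x_ne_zero : R.x ≠ 0 := by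
  simpa [R.basis_eq] using R.basis.ne_zero (⟨0, R.pos⟩, ⟨1, R.hn⟩, ⟨0, R.pos⟩)

lemma y_ne_zero : R.y ≠ 0 := by
  simpa [R.basis_eq] using R.basis.ne_zero (⟨1, R.hn⟩, ⟨0, R.pos⟩, ⟨0, R.pos⟩)

lemma g_ne_zero : R.g ≠ 0 := by
  simpa [R.basis_eq] using R.basis.ne_zero (⟨0, R.pos⟩, ⟨0, R.pos⟩, ⟨1, R.hn⟩)

lemma gpow_mul_basis (t r s l : Fin n) :
    R.g ^ (t : ℕ) * R.basis (r, s, l)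
      = (ω ^ ((t : ℕ) * r) * ω⁻¹ ^ ((t : ℕ) * s)) • R.basis (r, s, l + t) := by
  rw [R.basis_eq, R.basis_eq, ← mul_assoc, ← mul_assoc, R.gpow_mul_ypow, smul_mul_assoc,
    smul_mul_assoc, mul_assoc (R.y ^ _), R.gpow_mul_xpow, mul_smul_comm, smul_mul_assoc,
    smul_smul, ← mul_assoc, mul_assoc (R.y ^ _ * R.x ^ _), ← pow_add,
    pow_eq_pow_mod (_ + _) R.g_pow, Fin.val_add, Nat.add_comm (t : ℕ)]

lemma basis_mul_gpow (t r s l : Fin n) :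
    R.basis (r, s, l) * R.g ^ (t : ℕ) = R.basis (r, s, l + t) := by
  rw [R.basis_eq, R.basis_eq, mul_assoc, ← pow_add, pow_eq_pow_mod (_ + _) R.g_pow, Fin.val_add]

lemma repr_gpow_mul (p : H) (t r s l : Fin n) :
    R.basis.repr (R.g ^ (t : ℕ) * p) (r, s, l + t)
      = ω ^ ((t : ℕ) * r) * ω⁻¹ ^ ((t : ℕ) * s) * R.basis.repr p (r, s, l) :=
  R.basis.repr_apply_of_apply_basis_eq_smul (LinearMap.mulLeft ℂ (R.g ^ (t : ℕ)))
    (σ := fun v => (v.1, v.2.1, v.2.2 + t)) (fun _ _ h => by simpa [Prod.ext_iff] using h)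
    (fun v => ω ^ ((t : ℕ) * v.1) * ω⁻¹ ^ ((t : ℕ) * v.2.1))
    (fun ⟨r, s, l⟩ => R.gpow_mul_basis t r s l) p (r, s, l)

lemma repr_mul_gpow (p : H) (t r s l : Fin n) :
    R.basis.repr (p * R.g ^ (t : ℕ)) (r, s, l + t) = R.basis.repr p (r, s, l) := by
  simpa using R.basis.repr_apply_of_apply_basis_eq_smul (LinearMap.mulRight ℂ (R.g ^ (t : ℕ)))
    (σ := fun v => (v.1, v.2.1, v.2.2 + t)) (fun _ _ h => by simpa [Prod.ext_iff] using h) 1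
    (fun ⟨r, s, l⟩ => by simpa using R.basis_mul_gpow t r s l) p (r, s, l)

lemma omega_pow_eq_of_gpow_mul_eq_smul {p : H} {t : Fin n} {c : ℂ}
    (h : R.g ^ (t : ℕ) * p = c • (p * R.g ^ (t : ℕ))) {r s l : Fin n}
    (hp : R.basis.repr p (r, s, l) ≠ 0) :
    ω ^ ((t : ℕ) * r) * ω⁻¹ ^ ((t : ℕ) * s) = c := by
  have := congrArg (fun z => R.basis.repr z (r, s, l + t)) h
  simp only [repr_gpow_mul, map_smul, Finsupp.smul_apply, smul_eq_mul, repr_mul_gpow] at this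
  exact mul_right_cancel₀ hp this

open Algebra.TensorProduct in
lemma comul_gpow (l : ℕ) : Coalgebra.comul (R := ℂ) (R.g ^ l) = (R.g ^ l) ⊗ₜ[ℂ] (R.g ^ l) := by
  rw [Bialgebra.comul_pow, R.comul_g, tmul_pow]

open Algebra.TensorProduct in
lemma comul_ypow (r : ℕ) :
    Coalgebra.comul (R := ℂ) (R.y ^ r) = ∑ j ∈ Finset.range (r + 1),
      (qBinom ω⁻¹ r j * ω ^ ((r - j) * j)) • ((R.y ^ (r - j)) ⊗ₜ[ℂ] (R.y ^ j * R.g ^ (r - j))) := by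
  have h : (1 ⊗ₜ[ℂ] R.y) * (R.y ⊗ₜ[ℂ] R.g) = ω⁻¹ • ((R.y ⊗ₜ[ℂ] R.g) * (1 ⊗ₜ[ℂ] R.y)) := by
    rw [tmul_mul_tmul, tmul_mul_tmul, one_mul, mul_one, R.rel_gy, tmul_smul, smul_smul,
      inv_mul_cancel₀ R.omega_ne_zero, one_smul]
  rw [Bialgebra.comul_pow, R.comul_y, add_pow_of_mul_eq_smul ω⁻¹ h r]
  refine Finset.sum_congr rfl fun j _ => ?_
  rw [tmul_pow, tmul_pow, tmul_mul_tmul, one_pow, mul_one, R.gpow_mul_ypow, tmul_smul, smul_smul]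

open Algebra.TensorProduct in
lemma comul_xpow (s : ℕ) :
    Coalgebra.comul (R := ℂ) (R.x ^ s) = ∑ k ∈ Finset.range (s + 1),
      (qBinom ω s k * ω⁻¹ ^ ((s - k) * k)) • ((R.x ^ (s - k)) ⊗ₜ[ℂ] (R.x ^ k * R.g ^ (s - k))) := by
  have h : (1 ⊗ₜ[ℂ] R.x) * (R.x ⊗ₜ[ℂ] R.g) = ω • ((R.x ⊗ₜ[ℂ] R.g) * (1 ⊗ₜ[ℂ] R.x)) := by
    rw [tmul_mul_tmul, tmul_mul_tmul, one_mul, mul_one, R.rel_xg, tmul_smul]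
  rw [Bialgebra.comul_pow, R.comul_x, add_pow_of_mul_eq_smul ω h s]
  refine Finset.sum_congr rfl fun k _ => ?_
  rw [tmul_pow, tmul_pow, tmul_mul_tmul, one_pow, mul_one, R.gpow_mul_xpow, tmul_smul, smul_smul]

open Algebra.TensorProduct in
lemma comul_monomial (r s l : ℕ) :
    Coalgebra.comul (R := ℂ) (R.y ^ r * R.x ^ s * R.g ^ l)
      = ∑ j ∈ Finset.range (r + 1), ∑ k ∈ Finset.range (s + 1),
        (qBinom ω⁻¹ r j * qBinom ω s k * ω ^ ((r - j) * j) * ω⁻¹ ^ ((s - k) * k)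
            * ω⁻¹ ^ ((r - j) * k)) •
          ((R.y ^ (r - j) * R.x ^ (s - k) * R.g ^ l) ⊗ₜ[ℂ]
            (R.y ^ j * R.x ^ k * R.g ^ (r - j + (s - k) + l))) := by
  rw [Bialgebra.comul_mul, Bialgebra.comul_mul, R.comul_ypow, R.comul_xpow, R.comul_gpow,
    Finset.sum_mul, Finset.sum_mul]
  refine Finset.sum_congr rfl fun j _ => ?_
  rw [Finset.mul_sum, Finset.sum_mul]
  refine Finset.sum_congr rfl fun k _ => ?_
  simp only [smul_mul_assoc, mul_smul_comm, smul_smul, tmul_mul_tmul]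
  rw [mul_assoc (R.y ^ j), ← mul_assoc (R.g ^ (r - j)), R.gpow_mul_xpow]
  simp only [smul_mul_assoc, mul_smul_comm, tmul_smul, smul_smul, mul_assoc, ← pow_add]
  congr 1
  ring

lemma repr_comul_monomial_eq_zero (r s l : ℕ) (v w : Fin n × Fin n × Fin n)
    (h : ¬((v.1 : ℕ) + w.1 = r ∧ (v.2.1 : ℕ) + w.2.1 = s)) :
    (R.basis.tensorProduct R.basis).repr
      (Coalgebra.comul (R := ℂ) (R.y ^ r * R.x ^ s * R.g ^ l)) (v, w) = 0 := by
  rw [comul_monomial, map_sum, Finsupp.finsetSum_apply]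
  refine Finset.sum_eq_zero fun j hj => ?_
  rw [map_sum, Finsupp.finsetSum_apply]
  refine Finset.sum_eq_zero fun k hk => ?_
  simp only [Finset.mem_range] at hj hk
  simp only [map_smul, Finsupp.smul_apply, Module.Basis.tensorProduct_repr_tmul_apply,
    repr_monomial, smul_eq_mul]
  split_ifs <;> first | rfl | simp only [mul_zero, zero_mul] | omega

lemma repr_comul_monomial (v w : Fin n × Fin n × Fin n) (l : ℕ) :
    (R.basis.tensorProduct R.basis).repr (Coalgebra.comul (R := ℂ)
        (R.y ^ ((v.1 : ℕ) + w.1) * R.x ^ ((v.2.1 : ℕ) + w.2.1) * R.g ^ l)) (v, w)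
      = if (v.2.2 : ℕ) = l % n ∧ (w.2.2 : ℕ) = (v.1 + v.2.1 + l) % n then
          qBinom ω⁻¹ (v.1 + w.1) w.1 * qBinom ω (v.2.1 + w.2.1) w.2.1 * ω ^ ((v.1 : ℕ) * w.1)
            * ω⁻¹ ^ ((v.2.1 : ℕ) * w.2.1) * ω⁻¹ ^ ((v.1 : ℕ) * w.2.1)
        else 0 := by
  simp only [comul_monomial, map_sum, map_smul, Finset.sum_apply', Finsupp.smul_apply,
    Module.Basis.tensorProduct_repr_tmul_apply, repr_monomial, smul_eq_mul, ite_and, mul_ite,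
    mul_one, mul_zero]
  rw [Finset.sum_eq_single_of_mem (w.1 : ℕ) (by simp) fun j _ hj => by simp [Ne.symm hj]]
  rw [Finset.sum_eq_single_of_mem (w.2.1 : ℕ) (by simp) fun k _ hk => by simp [Ne.symm hk]]
  simp only [Nat.add_sub_cancel, if_true]

lemma repr_comul (p : H) (v w : Fin n × Fin n × Fin n) (hr : (v.1 : ℕ) + w.1 < n)
    (hs : (v.2.1 : ℕ) + w.2.1 < n) :
    (R.basis.tensorProduct R.basis).repr (Coalgebra.comul (R := ℂ) p) (v, w)
      = if (w.2.2 : ℕ) = (v.1 + v.2.1 + v.2.2) % n then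
          qBinom ω⁻¹ (v.1 + w.1) w.1 * qBinom ω (v.2.1 + w.2.1) w.2.1 * ω ^ ((v.1 : ℕ) * w.1)
            * ω⁻¹ ^ ((v.2.1 : ℕ) * w.2.1) * ω⁻¹ ^ ((v.1 : ℕ) * w.2.1)
            * R.basis.repr p (⟨v.1 + w.1, hr⟩, ⟨v.2.1 + w.2.1, hs⟩, v.2.2)
        else 0 := by
  set u₀ : Fin n × Fin n × Fin n := (⟨v.1 + w.1, hr⟩, ⟨v.2.1 + w.2.1, hs⟩, v.2.2)
  set Q := qBinom ω⁻¹ (v.1 + w.1) w.1 * qBinom ω (v.2.1 + w.2.1) w.2.1 * ω ^ ((v.1 : ℕ) * w.1)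
    * ω⁻¹ ^ ((v.2.1 : ℕ) * w.2.1) * ω⁻¹ ^ ((v.1 : ℕ) * w.2.1)
  have key : ((R.basis.tensorProduct R.basis).coord (v, w)).comp
        (Coalgebra.comul (R := ℂ) (A := H))
      = (if (w.2.2 : ℕ) = (v.1 + v.2.1 + v.2.2) % n then Q else 0) • R.basis.coord u₀ := by
    refine R.basis.ext fun ⟨r, s, l⟩ => ?_
    simp only [LinearMap.comp_apply, Module.Basis.coord_apply, LinearMap.smul_apply,
      R.basis.repr_self, smul_eq_mul]
    rw [R.basis_eq]
    by_cases h : (v.1 : ℕ) + w.1 = r ∧ (v.2.1 : ℕ) + w.2.1 = s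
    · obtain ⟨rfl, rfl⟩ : r = ⟨v.1 + w.1, hr⟩ ∧ s = ⟨v.2.1 + w.2.1, hs⟩ :=
        ⟨Fin.ext h.1.symm, Fin.ext h.2.symm⟩
      rw [R.repr_comul_monomial, Finsupp.single_apply, Nat.mod_eq_of_lt l.isLt]
      by_cases hl : v.2.2 = l
      · subst hl; simp [u₀, Q]
      · simp [u₀, hl, Ne.symm hl, Fin.val_eq_val]
    · have hu : (r, s, l) ≠ u₀ := fun hu => h
        ⟨congrArg (fun u => (u.1 : ℕ)) hu.symm, congrArg (fun u => (u.2.1 : ℕ)) hu.symm⟩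
      rw [R.repr_comul_monomial_eq_zero _ _ _ _ _ h, Finsupp.single_apply, if_neg hu, mul_zero]
  rw [← Module.Basis.coord_apply, ← LinearMap.comp_apply (g := Coalgebra.comul), key]
  split_ifs <;> simp

section NeZero

variable [NeZero n]

lemma repr_gpow (l : Fin n) : R.basis.repr (R.g ^ (l : ℕ)) = Finsupp.single (0, 0, l) 1 := by
  rw [← R.basis.repr_self, R.basis_eq]
  simp

lemma repr_one : R.basis.repr 1 = Finsupp.single (0, 0, 0) 1 := by
  simpa using R.repr_gpow 0

lemma repr_comul_apply_grouplike_right (p : H) (r s l : Fin n) :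
    (R.basis.tensorProduct R.basis).repr (Coalgebra.comul (R := ℂ) p) ((r, s, l), (0, 0, r + s + l))
      = R.basis.repr p (r, s, l) := by
  rw [R.repr_comul p _ _ (by simp) (by simp), if_pos (by simp [Fin.val_add, Nat.add_mod])]
  simp [qBinom_zero_right]

lemma repr_comul_apply_grouplike_left (p : H) (l r s l' : Fin n) :
    (R.basis.tensorProduct R.basis).repr (Coalgebra.comul (R := ℂ) p) ((0, 0, l), (r, s, l'))
      = if l' = l then R.basis.repr p (r, s, l) else 0 := by
  rw [R.repr_comul p _ _ (by simp) (by simp)]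
  simp [qBinom_self, Nat.mod_eq_of_lt l.isLt, Fin.val_eq_val]

lemma repr_comul_apply_y_x (p : H) (r s l : Fin n) :
    (R.basis.tensorProduct R.basis).repr (Coalgebra.comul (R := ℂ) p) ((r, 0, l), (0, s, r + l))
      = ω⁻¹ ^ ((r : ℕ) * s) * R.basis.repr p (r, s, l) := by
  rw [R.repr_comul p _ _ (by simp) (by simp), if_pos (by simp [Fin.val_add])]
  simp [qBinom_zero_right, qBinom_self]

theorem exists_eq_gpow_of_comul_eq_tmul_self {h : H} (h0 : h ≠ 0)
    (hΔ : Coalgebra.comul (R := ℂ) h = h ⊗ₜ[ℂ] h) : ∃ k : Fin n, h = R.g ^ (k : ℕ) := by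
  set c := R.basis.repr h
  have hc : ∀ v w, (R.basis.tensorProduct R.basis).repr (Coalgebra.comul (R := ℂ) h) (v, w)
      = c v * c w := fun v w => by
    rw [hΔ, Module.Basis.tensorProduct_repr_tmul_apply, smul_eq_mul, mul_comm]
  obtain ⟨⟨a, b, k⟩, hab⟩ := Finsupp.ne_iff.mp ((map_ne_zero_iff _ R.basis.repr.injective).mpr h0)
  have hk : c (0, 0, k) = 1 := by
    have := R.repr_comul_apply_grouplike_left h k a b k
    rw [hc, if_pos rfl] at this
    exact mul_left_eq_self₀.mp this |>.resolve_right hab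
  have hslice : ∀ r s l, c (r, s, l) ≠ 0 → l = k := fun r s l hp => by
    by_contra hl
    have := R.repr_comul_apply_grouplike_left h k r s l
    rw [hc, if_neg hl, hk, one_mul] at this
    exact hp this
  have hsum : ∀ r s, c (r, s, k) ≠ 0 → r + s = 0 := fun r s hp => by
    have := R.repr_comul_apply_grouplike_right h r s k
    rw [hc] at this
    have hne : c (0, 0, r + s + k) ≠ 0 := fun h0 => hp (by rw [← this, h0, mul_zero])
    simpa using hslice 0 0 _ hne
  have hsupp : ∀ v, v ≠ (0, 0, k) → c v = 0 := fun ⟨r, s, l⟩ hv => by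
    by_contra hp
    obtain rfl := hslice r s l hp
    have := R.repr_comul_apply_y_x h r s l
    rw [hc] at this
    have hr : c (r, 0, l) ≠ 0 := fun h0 => by
      rw [h0, zero_mul] at this
      exact hp ((mul_eq_zero.mp this.symm).resolve_left
        (pow_ne_zero _ (inv_ne_zero R.omega_ne_zero)))
    obtain rfl : r = 0 := by simpa using hsum r 0 hr
    obtain rfl : s = 0 := by simpa using hsum 0 s hp
    exact hv rfl
  refine ⟨k, ?_⟩
  rw [R.basis.eq_repr_smul_of_forall_ne hsupp, hk, one_smul, R.basis_eq]
  simp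

theorem eq_or_eq_of_comul_eq {p : H} {k : Fin n}
    (hΔ : Coalgebra.comul (R := ℂ) p = p ⊗ₜ[ℂ] (R.g ^ (k : ℕ)) + 1 ⊗ₜ[ℂ] p) {r s l : Fin n}
    (hp : R.basis.repr p (r, s, l) ≠ 0) :
    (r, s, l) = (0, 0, 0) ∨ (r, s, l) = (0, 0, k) ∨ (r, s, l) = (k, 0, 0) ∨
      (r, s, l) = (0, k, 0) := by
  have hc : ∀ v w, (R.basis.tensorProduct R.basis).repr (Coalgebra.comul (R := ℂ) p) (v, w)
      = R.basis.repr p v * Finsupp.single (0, 0, k) 1 w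
        + Finsupp.single (0, 0, 0) 1 v * R.basis.repr p w := fun v w => by
    rw [hΔ, map_add, Finsupp.add_apply, Module.Basis.tensorProduct_repr_tmul_apply,
      Module.Basis.tensorProduct_repr_tmul_apply, repr_gpow, repr_one, smul_eq_mul, smul_eq_mul]
    ring
  have hl : l = 0 ∨ (r, s, l) = (0, 0, k) := by
    by_contra! h
    have := R.repr_comul_apply_grouplike_left p l r s l
    rw [hc, if_pos rfl] at this
    simp [Ne.symm h.1, Ne.symm h.2] at this
    exact hp this.symm
  have hrs : r = 0 ∨ s = 0 := by
    by_contra! h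
    have := R.repr_comul_apply_y_x p r s l
    simp [hc, Ne.symm h.1, Ne.symm h.2, R.omega_ne_zero] at this
    exact hp this
  have hsum : (r, s, l) = (0, 0, 0) ∨ r + s + l = k := by
    by_contra! h
    have := R.repr_comul_apply_grouplike_right p r s l
    simp [hc, Ne.symm h.1, Ne.symm h.2] at this
    exact hp this.symm
  obtain rfl | h := hl
  · obtain h | rfl := hsum
    · exact .inl h
    · obtain rfl | rfl := hrs <;> simp
  · exact .inr (.inl h)

theorem eq_and_eq_of_comul_eq_of_gpow_mul_eq_smul {p : H} {k : Fin n} {c : ℂ} (hc : c ≠ 1)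
    (hk : ω ^ ((k : ℕ) * k) = ω)
    (hΔ : Coalgebra.comul (R := ℂ) p = p ⊗ₜ[ℂ] (R.g ^ (k : ℕ)) + 1 ⊗ₜ[ℂ] p)
    (hg : R.g ^ (k : ℕ) * p = c • (p * R.g ^ (k : ℕ))) {v : Fin n × Fin n × Fin n}
    (hp : R.basis.repr p v ≠ 0) :
    (v = (k, 0, 0) ∧ c = ω) ∨ (v = (0, k, 0) ∧ c = ω⁻¹) := by
  obtain ⟨r, s, l⟩ := v
  have hω := R.omega_pow_eq_of_gpow_mul_eq_smul hg hp
  obtain h | h | h | h := R.eq_or_eq_of_comul_eq hΔ hp <;>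
    simp only [Prod.mk.injEq] at h <;> obtain ⟨rfl, rfl, rfl⟩ := h
  · exact absurd (by simpa using hω) hc.symm
  · exact absurd (by simpa using hω) hc.symm
  · exact .inl ⟨rfl, by simpa [hk] using hω.symm⟩
  · exact .inr ⟨rfl, by simpa [inv_pow, hk] using hω.symm⟩

theorem exists_eq_smul_xpow_of_comul_eq (hn : 2 < n) {p : H} {k : Fin n}
    (hk : ω ^ ((k : ℕ) * k) = ω)
    (hΔ : Coalgebra.comul (R := ℂ) p = p ⊗ₜ[ℂ] (R.g ^ (k : ℕ)) + 1 ⊗ₜ[ℂ] p)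
    (hg : R.g ^ (k : ℕ) * p = ω⁻¹ • (p * R.g ^ (k : ℕ))) : ∃ α : ℂ, p = α • R.x ^ (k : ℕ) := by
  have hsupp : ∀ v ≠ (0, k, 0), R.basis.repr p v = 0 := fun v hv => by
    by_contra hp
    obtain ⟨-, h⟩ | ⟨h, -⟩ :=
      R.eq_and_eq_of_comul_eq_of_gpow_mul_eq_smul R.omega_inv_ne_one hk hΔ hg hp
    exacts [R.omega_ne_inv hn h.symm, hv h]
  exact ⟨_, by simpa [R.basis_eq] using R.basis.eq_repr_smul_of_forall_ne hsupp⟩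

theorem exists_eq_smul_ypow_of_comul_eq (hn : 2 < n) {p : H} {k : Fin n}
    (hk : ω ^ ((k : ℕ) * k) = ω)
    (hΔ : Coalgebra.comul (R := ℂ) p = p ⊗ₜ[ℂ] (R.g ^ (k : ℕ)) + 1 ⊗ₜ[ℂ] p)
    (hg : R.g ^ (k : ℕ) * p = ω • (p * R.g ^ (k : ℕ))) : ∃ β : ℂ, p = β • R.y ^ (k : ℕ) := by
  have hsupp : ∀ v ≠ (k, 0, 0), R.basis.repr p v = 0 := fun v hv => by
    by_contra hp
    obtain ⟨h, -⟩ | ⟨-, h⟩ :=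
      R.eq_and_eq_of_comul_eq_of_gpow_mul_eq_smul (R.hω.ne_one R.hn) hk hΔ hg hp
    exacts [hv h, R.omega_ne_inv hn h]
  exact ⟨_, by simpa [R.basis_eq] using R.basis.eq_repr_smul_of_forall_ne hsupp⟩

end NeZero

section Star

variable (st : HopfStarStructure H)

theorem exists_star_g_eq_gpow [NeZero n] : ∃ k : Fin n, st.star R.g = R.g ^ (k : ℕ) :=
  R.exists_eq_gpow_of_comul_eq_tmul_self (st.star_ne_zero R.g_ne_zero)
    (by rw [st.comul_star, R.comul_g, st.starTensor_tmul])

variable {st}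

theorem mul_self_mod_eq_one_of_star_g_eq {k : ℕ} (hk : st.star R.g = R.g ^ k) : k * k % n = 1 := by
  have h : R.g ^ 1 = R.g ^ (k * k) := by
    rw [pow_one, pow_mul, ← hk, ← st.star_pow, ← hk, st.star_star]
  rw [← R.gpow_mod_eq_of_gpow_eq h, Nat.mod_eq_of_lt R.hn]

theorem gpow_mul_star_x {k : ℕ} (hk : st.star R.g = R.g ^ k) :
    R.g ^ k * st.star R.x = ω⁻¹ • (st.star R.x * R.g ^ k) := by
  simpa [st.star_mul, st.star_smul, hk, R.conj_omega] using congrArg st.star R.rel_xg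

theorem gpow_mul_star_y {k : ℕ} (hk : st.star R.g = R.g ^ k) :
    R.g ^ k * st.star R.y = ω • (st.star R.y * R.g ^ k) := by
  have h := congrArg st.star R.rel_gy
  rw [st.star_mul, st.star_smul, st.star_mul, hk, R.conj_omega] at h
  rw [h, smul_smul, mul_inv_cancel₀ R.omega_ne_zero, one_smul]

theorem eq_one_of_star_x_eq {k : ℕ} {α : ℂ} (hk : k * k % n = 1)
    (hα : st.star R.x = α • R.x ^ k) : k = 1 := by
  by_contra hk1
  have hkk : n ≤ k * k := by
    by_contra! hlt
    rw [Nat.mod_eq_of_lt hlt] at hk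
    exact hk1 (Nat.eq_one_of_mul_eq_one_right hk)
  apply R.x_ne_zero
  rw [← st.star_star R.x, hα, st.star_smul, st.star_pow, hα, smul_pow, ← pow_mul,
    R.xpow_eq_zero hkk, smul_zero, smul_zero]

end Star

end RadfordAlgebra

/-- for `n > 2`, every `*`-structure on the Radford algebra `H`
is of the form `g* = g`, `x* = α x`, `y* = β y` with `|α| = |β| = 1`. -/
theorem radford_star_classification_of_two_lt
    {n : ℕ} {ω : ℂ} {H : Type*} [Ring H] [HopfAlgebra ℂ H]
    (hn : 2 < n) (R : RadfordAlgebra n ω H) (st : HopfStarStructure H) :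
    st.star R.g = R.g ∧
      ∃ α β : ℂ, ‖α‖ = 1 ∧ ‖β‖ = 1 ∧
        st.star R.x = α • R.x ∧ st.star R.y = β • R.y := by
  have := R.neZero
  obtain ⟨k, hg⟩ := R.exists_star_g_eq_gpow st
  have hkk := R.mul_self_mod_eq_one_of_star_g_eq hg
  have hωk : ω ^ ((k : ℕ) * k) = ω := by rw [pow_eq_pow_mod _ R.hω.pow_eq_one, hkk, pow_one]
  obtain ⟨α, hα⟩ := R.exists_eq_smul_xpow_of_comul_eq hn hωk
    (hg ▸ st.comul_star_of_comul_eq R.comul_x) (R.gpow_mul_star_x hg)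
  obtain ⟨β, hβ⟩ := R.exists_eq_smul_ypow_of_comul_eq hn hωk
    (hg ▸ st.comul_star_of_comul_eq R.comul_y) (R.gpow_mul_star_y hg)
  have hk1 := R.eq_one_of_star_x_eq hkk hα
  rw [hk1, pow_one] at hg hα hβ
  exact ⟨hg, α, β, st.norm_eq_one_of_star_eq_smul R.x_ne_zero hα,
    st.norm_eq_one_of_star_eq_smul R.y_ne_zero hβ, hα, hβ⟩
end
end
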